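/- arXiv:1405.5852 — 3 statements merged into one kernel-verified Lean document; each statement's English description precedes it below -/
import Mathlib

section
/- For every integer k ≥ 1 and every real t, the k-th derivative of the Mills ratio satisfies R^{(k)}(t) = P_k(t)·R(t) − Q_{k−1}(t), where P_k and Q_{k−1} are the Laplace polynomials. -/
open MeasureTheory Polynomial

/-- The standard normal density. -/
noncomputable def gaussPdf (t : ℝ) : ℝ := Real.exp (-t ^ 2 / 2) / Real.sqrt (2 * Real.pi)

/-- The tail of the standard normal distribution. -/
noncomputable def gaussTail (t : ℝ) : ℝ := ∫ s in Set.Ioi t, gaussPdf s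

/-- The Mills ratio. -/
noncomputable def mills (t : ℝ) : ℝ := gaussTail t / gaussPdf t

/-- The Laplace polynomials `P_k`. -/
noncomputable def laplaceP : ℕ → Polynomial ℝ
  | 0 => 1
  | k + 1 => X * laplaceP k + derivative (laplaceP k)

/-- The Laplace polynomials `Q_k`. -/
noncomputable def laplaceQ : ℕ → Polynomial ℝ
  | 0 => 1
  | k + 1 => laplaceP (k + 1) + derivative (laplaceQ k)

/-!
The Mills ratio solves the linear ODE `R' = t R - 1`, because `φ' = -t φ` and `Φ̄' = -φ`.
Differentiating `P R - Q` with this ODE gives `(t P + P') R - (P + Q')`, which is exactly the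
recursion defining the Laplace polynomials, so the formula follows by induction on `k`.
-/

lemma hasDerivAt_integral_Ioi {E : Type*} [NormedAddCommGroup E] [NormedSpace ℝ E]
    [CompleteSpace E] {f : ℝ → E} (hint : Integrable f) (hcont : Continuous f) (t : ℝ) :
    HasDerivAt (fun u => ∫ s in Set.Ioi u, f s) (-f t) t := by
  have htail : (fun u => ∫ s in Set.Ioi u, f s) =
      fun u => (∫ s in Set.Ioi 0, f s) - ∫ s in (0 : ℝ)..u, f s := by
    funext u
    rw [← intervalIntegral.integral_Ioi_sub_Ioi' hint.integrableOn hint.integrableOn,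
      sub_sub_cancel]
  have hprim : HasDerivAt (fun u => ∫ s in (0 : ℝ)..u, f s) (f t) t :=
    intervalIntegral.integral_hasDerivAt_right hint.intervalIntegrable
      hcont.aestronglyMeasurable.stronglyMeasurableAtFilter hcont.continuousAt
  rw [htail, ← zero_sub]
  exact (hasDerivAt_const t _).sub hprim

lemma gaussPdf_pos (t : ℝ) : 0 < gaussPdf t :=
  div_pos (Real.exp_pos _) (Real.sqrt_pos.2 (by positivity))

lemma hasDerivAt_gaussPdf (t : ℝ) : HasDerivAt gaussPdf (-t * gaussPdf t) t := by
  have hexponent : HasDerivAt (fun t : ℝ => -t ^ 2 / 2) (-t) t := by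
    simpa using ((hasDerivAt_pow 2 t).neg.div_const 2).congr_deriv (by ring)
  exact (hexponent.exp.div_const _).congr_deriv (by rw [gaussPdf]; ring)

lemma continuous_gaussPdf : Continuous gaussPdf :=
  continuous_iff_continuousAt.2 fun t => (hasDerivAt_gaussPdf t).continuousAt

lemma integrable_gaussPdf : Integrable gaussPdf := by
  have hform :
      gaussPdf = fun t => Real.exp (-(1 / 2) * t ^ 2) * (Real.sqrt (2 * Real.pi))⁻¹ := by
    funext t
    rw [gaussPdf, div_eq_mul_inv, show -t ^ 2 / 2 = -(1 / 2) * t ^ 2 by ring]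
  rw [hform]
  exact (integrable_exp_neg_mul_sq (by norm_num)).mul_const _

lemma hasDerivAt_gaussTail (t : ℝ) : HasDerivAt gaussTail (-gaussPdf t) t :=
  hasDerivAt_integral_Ioi integrable_gaussPdf continuous_gaussPdf t

lemma hasDerivAt_mills (t : ℝ) : HasDerivAt mills (t * mills t - 1) t := by
  have hφ := (gaussPdf_pos t).ne'
  refine ((hasDerivAt_gaussTail t).div (hasDerivAt_gaussPdf t) hφ).congr_deriv ?_
  rw [mills]
  field_simp
  ring

lemma hasDerivAt_eval_mul_sub_eval {f : ℝ → ℝ} {t : ℝ}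
    (hf : HasDerivAt f (t * f t - 1) t) (P Q : ℝ[X]) :
    HasDerivAt (fun u => P.eval u * f u - Q.eval u)
      ((X * P + derivative P).eval t * f t - (P + derivative Q).eval t) t := by
  refine ((P.hasDerivAt t).mul hf).sub (Q.hasDerivAt t) |>.congr_deriv ?_
  simp only [eval_add, eval_mul, eval_X]
  ring

lemma iteratedDeriv_succ_eq_laplace {f : ℝ → ℝ}
    (hf : ∀ t, HasDerivAt f (t * f t - 1) t) (k : ℕ) :
    iteratedDeriv (k + 1) f = fun t => (laplaceP (k + 1)).eval t * f t - (laplaceQ k).eval t := by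
  induction k with
  | zero =>
    funext t
    simp [iteratedDeriv_one, (hf t).deriv, laplaceP, laplaceQ]
  | succ k ih =>
    funext t
    rw [iteratedDeriv_succ, ih]
    exact (hasDerivAt_eval_mul_sub_eval (hf t) _ _).deriv

/-- For every `k ≥ 1` and every real `t`, the `k`-th derivative of the Mills ratio
satisfies `R^{(k)}(t) = P_k(t)·R(t) − Q_{k−1}(t)`. -/
theorem iteratedDeriv_mills (k : ℕ) (hk : 1 ≤ k) (t : ℝ) :
    iteratedDeriv k mills t = (laplaceP k).eval t * mills t - (laplaceQ (k - 1)).eval t := by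
  obtain ⟨n, rfl⟩ := Nat.exists_eq_add_of_le' hk
  rw [iteratedDeriv_succ_eq_laplace hasDerivAt_mills n, Nat.add_sub_cancel]
end

section
/- Let p_{k,m} and q_{k,m} denote the coefficients of t^m in P_k(t) and Q_k(t) respectively. If k ≡ m (mod 2) with n = (k − m)/2, then m! · q_{k,m} = Σ_{j=0}^{n} (m+j)! · p_{k−j, m+j}; moreover q_{k,m} = 0 whenever k − m is odd. -/
/-!
Unrolling the recursion for `Q_k` gives `Q_k = ∑_{j ≤ k} D^j P_{k-j}`, and the coefficient of
`t^m` in `D^j p` is `(m+j)!/m!` times the coefficient of `t^{m+j}` in `p`. Since `P_k` has degree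
at most `k` and only monomials `t^i` with `i ≡ k (mod 2)`, the terms with `m + j > k - j`,
i.e. `j > n`, vanish, and when `k - m` is odd every term vanishes.
-/

open Polynomial

theorem Polynomial.factorial_mul_coeff_iterate_derivative {R : Type*} [Semiring R]
    (p : R[X]) (j m : ℕ) :
    (m.factorial : R) * (derivative^[j] p).coeff m = ((m + j).factorial : R) * p.coeff (m + j) := by
  rw [coeff_iterate_derivative, nsmul_eq_mul, ← mul_assoc, ← Nat.cast_mul,
    ← Nat.factorial_mul_descFactorial (Nat.le_add_left j m), Nat.add_sub_cancel]

theorem coeff_laplaceP_succ_zero (k : ℕ) :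
    (laplaceP (k + 1)).coeff 0 = (laplaceP k).coeff 1 := by
  simp [laplaceP, coeff_derivative]

theorem coeff_laplaceP_succ_succ (k m : ℕ) :
    (laplaceP (k + 1)).coeff (m + 1) =
      (laplaceP k).coeff m + (laplaceP k).coeff (m + 2) * (m + 2) := by
  rw [laplaceP, coeff_add, coeff_X_mul, coeff_derivative]
  push_cast
  ring

theorem natDegree_laplaceP_le (k : ℕ) : (laplaceP k).natDegree ≤ k := by
  induction k with
  | zero => simp [laplaceP]
  | succ k ih =>
    refine natDegree_add_le_of_degree_le ?_ ?_
    · exact natDegree_mul_le.trans (by linarith [natDegree_X_le (R := ℝ)])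
    · exact (natDegree_derivative_le _).trans (by omega)

theorem coeff_laplaceP_eq_zero_of_odd {k m : ℕ} (h : Odd (k + m)) :
    (laplaceP k).coeff m = 0 := by
  induction k generalizing m with
  | zero =>
    have hm : m ≠ 0 := by rintro rfl; simp at h
    simp [laplaceP, coeff_one, hm]
  | succ k ih =>
    rcases m with _ | m
    · rw [coeff_laplaceP_succ_zero, ih (by simpa using h)]
    · rw [coeff_laplaceP_succ_succ, ih (m := m) (by grind), ih (m := m + 2) (by grind),
        zero_mul, add_zero]

theorem laplaceQ_eq_sum_iterate_derivative (k : ℕ) :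
    laplaceQ k = ∑ j ∈ Finset.range (k + 1), derivative^[j] (laplaceP (k - j)) := by
  induction k with
  | zero => simp [laplaceQ, laplaceP]
  | succ k ih =>
    rw [Finset.sum_range_succ', laplaceQ, ih, map_sum, add_comm]
    simp only [Function.iterate_succ_apply', Nat.succ_sub_succ, Function.iterate_zero_apply,
      Nat.sub_zero]

theorem factorial_mul_coeff_laplaceQ (k m : ℕ) :
    (m.factorial : ℝ) * (laplaceQ k).coeff m =
      ∑ j ∈ Finset.range (k + 1),
        ((m + j).factorial : ℝ) * (laplaceP (k - j)).coeff (m + j) := by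
  simp only [laplaceQ_eq_sum_iterate_derivative, finsetSum_coeff, Finset.mul_sum,
    factorial_mul_coeff_iterate_derivative]

/-- If `k ≡ m (mod 2)` with `n = (k − m)/2`, then
`m!·q_{k,m} = Σ_{j=0}^{n} (m+j)!·p_{k−j, m+j}`; moreover `q_{k,m} = 0` when `k − m` is odd. -/
theorem laplaceQ_coeff_via_laplaceP (k m : ℕ) :
    (∀ n : ℕ, m ≤ k → k - m = 2 * n →
      (m.factorial : ℝ) * (laplaceQ k).coeff m =
        ∑ j ∈ Finset.range (n + 1),
          ((m + j).factorial : ℝ) * (laplaceP (k - j)).coeff (m + j)) ∧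
      (Odd ((k : ℤ) - m) → (laplaceQ k).coeff m = 0) := by
  constructor
  · intro n hmk hn
    rw [factorial_mul_coeff_laplaceQ]
    refine (Finset.sum_subset (Finset.range_subset_range.2 (by omega)) fun j hj hjn => ?_).symm
    simp only [Finset.mem_range, not_lt] at hj hjn
    rw [coeff_eq_zero_of_natDegree_lt ((natDegree_laplaceP_le _).trans_lt (by omega)), mul_zero]
  · rintro ⟨c, hc⟩
    have hterms : ∀ j ∈ Finset.range (k + 1),
        ((m + j).factorial : ℝ) * (laplaceP (k - j)).coeff (m + j) = 0 := by
      intro j hj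
      have hjk : j ≤ k := Nat.lt_succ_iff.1 (Finset.mem_range.1 hj)
      rw [coeff_laplaceP_eq_zero_of_odd ⟨(c + m).toNat, by omega⟩, mul_zero]
    have hsum := factorial_mul_coeff_laplaceQ k m
    rw [Finset.sum_eq_zero hterms] at hsum
    exact (mul_eq_zero.1 hsum).resolve_left (Nat.cast_ne_zero.2 (Nat.factorial_ne_zero m))
end

section
/- The constant term of the Laplace polynomial Q_{2n} satisfies q_{2n,0} = 2^n · n! for every integer n ≥ 0. -/
open Polynomial

/-! Since `P_{k+1}' = (k+1) P_k`, the polynomials `Q_k` satisfy the three-term recurrence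
`Q_{k+2} = t Q_{k+1} + (k+2) Q_k`. At `t = 0` the first term vanishes, so
`q_{k+2,0} = (k+2) q_{k,0}`, whence `q_{2n,0} = 2n (2n-2) ⋯ 2 = 2^n n!`. -/

theorem derivative_laplaceP_succ (k : ℕ) :
    derivative (laplaceP (k + 1)) = ((k : ℝ[X]) + 1) * laplaceP k := by
  induction k with
  | zero => simp [laplaceP]
  | succ k ih =>
    rw [laplaceP, derivative_add, derivative_mul, derivative_X, ih, laplaceP]
    simp only [derivative_mul, derivative_add, derivative_natCast, derivative_one]
    push_cast
    ring

theorem laplaceQ_add_two (k : ℕ) :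
    laplaceQ (k + 2) = X * laplaceQ (k + 1) + ((k : ℝ[X]) + 2) * laplaceQ k := by
  induction k with
  | zero => simp [laplaceQ, laplaceP]; ring
  | succ k ih =>
    have hQ₁ : laplaceQ (k + 2) = laplaceP (k + 2) + derivative (laplaceQ (k + 1)) := rfl
    have hQ₂ : laplaceQ (k + 1) = laplaceP (k + 1) + derivative (laplaceQ k) := rfl
    calc laplaceQ (k + 3)
        = X * laplaceP (k + 2) + derivative (laplaceP (k + 2))
            + derivative (X * laplaceQ (k + 1) + ((k : ℝ[X]) + 2) * laplaceQ k) := by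
          rw [← ih]; rfl
      _ = X * (laplaceP (k + 2) + derivative (laplaceQ (k + 1))) + laplaceQ (k + 1)
            + ((k : ℝ[X]) + 2) * (laplaceP (k + 1) + derivative (laplaceQ k)) := by
          rw [derivative_laplaceP_succ]
          simp only [derivative_add, derivative_mul, derivative_X, derivative_natCast,
            derivative_ofNat]
          push_cast
          ring
      _ = X * laplaceQ (k + 2) + ((↑(k + 1) : ℝ[X]) + 2) * laplaceQ (k + 1) := by
          rw [← hQ₁, ← hQ₂]
          push_cast
          ring

theorem laplaceQ_coeff_zero_add_two (k : ℕ) :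
    (laplaceQ (k + 2)).coeff 0 = ((k : ℝ) + 2) * (laplaceQ k).coeff 0 := by
  rw [laplaceQ_add_two, coeff_add, coeff_X_mul_zero, zero_add, ← C_eq_natCast, ← C_ofNat,
    ← C_add, coeff_C_mul]

/-- The constant term of `Q_{2n}` equals `2^n·n!`. -/
theorem laplaceQ_coeff_zero (n : ℕ) :
    (laplaceQ (2 * n)).coeff 0 = 2 ^ n * n.factorial := by
  induction n with
  | zero => simp [laplaceQ]
  | succ n ih =>
    rw [show 2 * (n + 1) = 2 * n + 2 by ring, laplaceQ_coeff_zero_add_two, ih,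
      Nat.factorial_succ]
    push_cast
    ring
end
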